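/- Let K be a field of positive characteristic p and let U, V be K[t]/(t^p)-modules. Give Hom_K(U, V) the K[t]/(t^p)-module structure with t acting by (t·f)(u) = t·f(u) − f(t·u). Then Hom_K(U, V) is projective if and only if U is projective or V is projective. -/

import Mathlib

set_option synthInstance.maxHeartbeats 1000000

/-- `K[t]/(t^p)`. -/
abbrev TruncP (K : Type*) [Field K] (p : ℕ) :=
  Polynomial K ⧸ Ideal.span {(Polynomial.X : Polynomial K) ^ p}

/-- the class of `t` in `K[t]/(t^p)`. -/
noncomputable abbrev tcl (K : Type*) [Field K] (p : ℕ) : TruncP K p :=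
  Ideal.Quotient.mk _ (Polynomial.X : Polynomial K)

/-!
Write `A = K[t]/(t^p)` and, for `K`-linear `f : M → N` between `A`-modules,
`trace f = ∑ t^j ∘ f ∘ t^(p-1-j)`. Since `C(p-1, j) = (-1)^j` in characteristic `p`, the element
`t^(p-1)` acts on `Hom_K(U, V)` as `trace`, while the kernel of `t` consists of the `A`-linear maps.

An `A`-module `M` is projective iff `ker t ⊆ t^(p-1) M`: lifts along `t^(p-1)` of a `K`-basis of
`ker t` form an `A`-basis (injectivity only has to be tested on `ker t`, as `t` is nilpotent).
Equivalently `id_M = trace π` for some `K`-linear `π` (Higman's criterion). Hence `Hom_K(U, V)` is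
projective iff every `A`-linear `f : U → V` is a trace. If `U` is projective, `f = trace (f ∘ π)`;
if `V` is, `f = trace (π ∘ f)`. If neither is, take `t^(a-1) x ∉ t^a U` with `t^a x = 0` and
`t^(b-1) v ∉ t^b V` with `t^b v = 0`, put `m = min a b`, and build an `A`-linear
`f : U → K[t]/(t^m) → V` with `f (t^(m-1) x) = t^(b-1) v`. A trace sends `x` into `t^(p-a) V`,
which would put `t^(b-1) v` into `t^b V`.
-/

theorem LinearMap.injective_of_forall_smul_eq_zero {R M N : Type*} [Semiring R]
    [AddCommGroup M] [Module R M] [AddCommGroup N] [Module R N] {t : R} (ht : IsNilpotent t)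
    (φ : M →ₗ[R] N) (h : ∀ x, t • x = 0 → φ x = 0 → x = 0) : Function.Injective φ := by
  obtain ⟨n, hn⟩ := ht
  suffices ∀ k, ∀ x, t ^ k • x = 0 → φ x = 0 → x = 0 from
    (injective_iff_map_eq_zero φ).2 fun x hx => this n x (by rw [hn, zero_smul]) hx
  intro k
  induction k with
  | zero => intro x hx _; rwa [pow_zero, one_smul] at hx
  | succ k ih =>
    intro x hx hφ
    exact h x (ih (t • x) (by rwa [smul_smul, ← pow_succ]) (by rw [map_smul, hφ, smul_zero])) hφ

theorem Nat.cast_choose_pred_eq_neg_one_pow {R : Type*} [Ring R] {p : ℕ} [hp : Fact p.Prime]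
    [CharP R p] {j : ℕ} (hj : j < p) : ((p - 1).choose j : R) = (-1) ^ j := by
  induction j with
  | zero => simp
  | succ j ih =>
    have hpascal : p.choose (j + 1) = (p - 1).choose j + (p - 1).choose (j + 1) := by
      conv_lhs => rw [← Nat.sub_add_cancel hp.out.one_le, Nat.choose_succ_succ]
    have hzero : (p.choose (j + 1) : R) = 0 :=
      (CharP.cast_eq_zero_iff R p _).2 (hp.out.dvd_choose_self j.succ_ne_zero hj)
    rw [hpascal, Nat.cast_add, ih (by omega)] at hzero
    rw [pow_succ, mul_neg_one, eq_neg_iff_add_eq_zero, add_comm, hzero]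

theorem Commute.sub_pow_pred_eq_sum {K R : Type*} [CommRing K] [Ring R] [Algebra K R] {p : ℕ}
    [Fact p.Prime] [CharP K p] {x y : R} (h : Commute x y) :
    (x - y) ^ (p - 1) = ∑ j ∈ Finset.range p, x ^ j * y ^ (p - 1 - j) := by
  have hp : 0 < p := Fact.out (p := p.Prime) |>.pos
  rw [sub_eq_add_neg, h.neg_right.add_pow, Nat.sub_add_cancel hp]
  refine Finset.sum_congr rfl fun j hj => ?_
  have hj := Finset.mem_range.1 hj
  have hsign : (-1 : K) ^ (p - 1 - j) * ((p - 1).choose j : K) = 1 := by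
    rw [Nat.cast_choose_pred_eq_neg_one_pow hj, ← pow_add, Nat.sub_add_cancel (by omega),
      ← Nat.cast_choose_pred_eq_neg_one_pow (Nat.sub_lt hp one_pos), Nat.choose_self, Nat.cast_one]
  rw [← neg_one_smul K y, smul_pow, ← map_natCast (algebraMap K R), Algebra.algebraMap_eq_smul_one,
    mul_smul_comm, mul_one, mul_smul_comm, smul_smul, mul_comm, hsign, one_smul]

namespace TruncP

open Polynomial Finset

variable {K : Type*} [Field K] {p : ℕ}

local notation "τ" => tcl K p

theorem tcl_pow_self : τ ^ p = 0 := by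
  rw [tcl, ← map_pow]
  exact Ideal.Quotient.eq_zero_iff_mem.mpr (Ideal.subset_span rfl)

theorem tcl_pow_eq_zero {k : ℕ} (hk : p ≤ k) : τ ^ k = 0 := by
  rw [← Nat.add_sub_cancel' hk, pow_add, tcl_pow_self, zero_mul]

variable (K p) in
noncomputable def topCoeff : TruncP K p →ₗ[K] K :=
  (lcoeff K (p - 1)).comp (AdjoinRoot.modByMonicHom (monic_X_pow (R := K) p))

theorem topCoeff_mk (g : K[X]) :
    topCoeff K p (Ideal.Quotient.mk _ g) = (g %ₘ X ^ p).coeff (p - 1) := rfl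

theorem smul_tcl_pow_eq_mk (c : K) (i : ℕ) :
    c • τ ^ i = Ideal.Quotient.mk _ (monomial i c) := by
  rw [← smul_X_eq_monomial, ← Ideal.Quotient.mkₐ_eq_mk K, map_smul, map_pow]; rfl

theorem eq_top_of_forall_smul_eq_zero {M : Type*} [AddCommGroup M] [Module (TruncP K p) M]
    (N : Submodule (TruncP K p) M) (hN : ∀ x : M, τ • x = 0 → ∃ y ∈ N, τ ^ (p - 1) • y = x) :
    N = ⊤ := by
  suffices ∀ k, ∀ m : M, τ ^ k • m = 0 → m ∈ N from
    eq_top_iff.2 fun m _ => this p m (by rw [tcl_pow_self]; exact zero_smul (TruncP K p) m)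
  intro k
  induction k with
  | zero => intro m hm; rw [pow_zero, one_smul] at hm; exact hm ▸ N.zero_mem
  | succ k ih =>
    intro m hm
    rcases le_or_gt p k with hk | hk
    · exact ih m (by rw [tcl_pow_eq_zero hk]; exact zero_smul (TruncP K p) m)
    · obtain ⟨y, hyN, hy⟩ := hN (τ ^ k • m) (by rwa [smul_smul, ← pow_succ'])
      have : m - τ ^ (p - 1 - k) • y ∈ N := ih _ (by
        rw [smul_sub, smul_smul, ← pow_add, Nat.add_sub_cancel' (by omega), hy, sub_self])
      simpa using N.add_mem this (N.smul_mem (τ ^ (p - 1 - k)) hyN)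

section TopCoeff

variable [NeZero p]

theorem topCoeff_tcl_pow (k : ℕ) : topCoeff K p (τ ^ k) = if k = p - 1 then 1 else 0 := by
  rcases lt_or_ge k p with hk | hk
  · have : (X ^ k : K[X]) %ₘ X ^ p = X ^ k := by
      rw [modByMonic_eq_self_iff (monic_X_pow p), degree_X_pow, degree_X_pow]
      exact_mod_cast hk
    rw [tcl, ← map_pow, topCoeff_mk, this, coeff_X_pow]
    simp [eq_comm]
  · rw [tcl_pow_eq_zero hk, map_zero, if_neg (by have := NeZero.pos p; omega)]

theorem sum_tcl_pow_mul_topCoeff (r : TruncP K p) :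
    ∑ j ∈ range p, τ ^ j * algebraMap K _ (topCoeff K p (τ ^ (p - 1 - j) * r)) = r := by
  obtain ⟨g, rfl⟩ := Ideal.Quotient.mk_surjective r
  induction g using Polynomial.induction_on' with
  | add f g hf hg => simp only [map_add, mul_add, sum_add_distrib, hf, hg]
  | monomial i c =>
    rw [← smul_tcl_pow_eq_mk]
    rcases lt_or_ge i p with hi | hi
    · have hterm : ∀ j ∈ range p,
          τ ^ j * algebraMap K _ (topCoeff K p (τ ^ (p - 1 - j) * c • τ ^ i)) =
            if i = j then c • τ ^ i else 0 := by
        intro j hj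
        rw [mul_smul_comm, map_smul, ← pow_add, topCoeff_tcl_pow]
        have := mem_range.mp hj
        by_cases hij : i = j
        · subst hij
          rw [if_pos (by omega), if_pos rfl, smul_eq_mul, mul_one, ← Algebra.commutes,
            ← Algebra.smul_def]
        · rw [if_neg (by omega), if_neg hij, smul_zero, map_zero, mul_zero]
      rw [sum_congr rfl hterm, sum_ite_eq, if_pos (mem_range.mpr hi)]
    · simp [tcl_pow_eq_zero hi]

end TopCoeff

section Trace

variable {M N : Type*} [AddCommGroup M] [Module K M] [Module (TruncP K p) M]
  [AddCommGroup N] [Module K N] [Module (TruncP K p) N]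

variable (p) in
noncomputable def trace (f : M →ₗ[K] N) (m : M) : N :=
  ∑ j ∈ range p, τ ^ j • f (τ ^ (p - 1 - j) • m)

theorem map_pow_smul_of_map_smul {f : M →ₗ[K] N} (hf : ∀ m, f (τ • m) = τ • f m) (k : ℕ) (m : M) :
    f (τ ^ k • m) = τ ^ k • f m := by
  induction k with
  | zero => simp
  | succ k ih => rw [pow_succ', mul_smul, hf, ih, ← mul_smul, ← pow_succ']

theorem trace_comp_left {M' : Type*} [AddCommGroup M'] [Module K M'] [Module (TruncP K p) M']
    {f : N →ₗ[K] M'} (hf : ∀ n, f (τ • n) = τ • f n)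
    (g : M →ₗ[K] N) (m : M) : trace p (f ∘ₗ g) m = f (trace p g m) := by
  simp only [trace, map_sum, LinearMap.comp_apply, map_pow_smul_of_map_smul hf]

theorem trace_comp_right {M' : Type*} [AddCommGroup M'] [Module K M'] [Module (TruncP K p) M']
    {f : M' →ₗ[K] M} (hf : ∀ n, f (τ • n) = τ • f n)
    (g : M →ₗ[K] N) (m : M') : trace p (g ∘ₗ f) m = trace p g (f m) := by
  simp only [trace, LinearMap.comp_apply, map_pow_smul_of_map_smul hf]

variable [NeZero p]

theorem pow_pred_smul_of_trace_eq_self {π : M →ₗ[K] M} {m : M} (hπ : trace p π m = m)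
    (hm : τ • m = 0) : τ ^ (p - 1) • π m = m := by
  conv_rhs => rw [← hπ, trace]
  rw [sum_eq_single (p - 1), Nat.sub_self, pow_zero, one_smul]
  · intro j hj hjp
    rw [show p - 1 - j = (p - 1 - j - 1) + 1 by have := mem_range.mp hj; omega, pow_succ,
      mul_smul, hm, smul_zero, map_zero, smul_zero]
  · intro h; exact absurd (mem_range.2 (Nat.sub_lt (NeZero.pos p) one_pos)) h

theorem trace_mapRange_topCoeff {ι : Type*} (x : ι →₀ TruncP K p) :
    trace p (Finsupp.mapRange.linearMap (Algebra.linearMap K _ ∘ₗ topCoeff K p)) x = x := by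
  ext i
  simp only [trace, Finsupp.finsetSum_apply, Finsupp.smul_apply, Finsupp.mapRange.linearMap_apply,
    Finsupp.mapRange_apply, LinearMap.comp_apply, Algebra.linearMap_apply, smul_eq_mul]
  exact sum_tcl_pow_mul_topCoeff (x i)

end Trace

section Projective

variable {M : Type*} [AddCommGroup M] [Module K M] [Module (TruncP K p) M]
  [IsScalarTower K (TruncP K p) M] [NeZero p]

theorem exists_trace_eq_self [Module.Projective (TruncP K p) M] :
    ∃ π : M →ₗ[K] M, ∀ m, trace p π m = m := by
  obtain ⟨s, hs⟩ := Module.projective_def'.1 ‹Module.Projective (TruncP K p) M›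
  let r := Finsupp.linearCombination (TruncP K p) (id : M → M)
  refine ⟨r.restrictScalars K ∘ₗ
    Finsupp.mapRange.linearMap (Algebra.linearMap K _ ∘ₗ topCoeff K p) ∘ₗ s.restrictScalars K,
    fun m => ?_⟩
  rw [trace_comp_left (fun x => r.map_smul τ x), trace_comp_right (fun x => s.map_smul τ x),
    trace_mapRange_topCoeff]
  exact LinearMap.congr_fun hs m

theorem projective_of_forall_smul_eq_zero
    (h : ∀ m : M, τ • m = 0 → ∃ m', τ ^ (p - 1) • m' = m) :
    Module.Projective (TruncP K p) M := by
  classical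
  let S : Submodule K M := LinearMap.ker (DistribSMul.toLinearMap K M τ)
  let b := Module.Basis.ofVectorSpace K S
  choose u hu using fun i => h (b i) (b i).2
  let φ := Finsupp.linearCombination (TruncP K p) u
  let lift := Finsupp.mapRange.linearMap (α := Module.Basis.ofVectorSpaceIndex K S)
    (Algebra.linearMap K (TruncP K p))
  have hφ : ∀ c, τ ^ (p - 1) • φ (lift c) = (Finsupp.linearCombination K b c : M) := by
    intro c
    simp only [φ, lift, Finsupp.mapRange.linearMap_apply, Finsupp.linearCombination_apply]
    rw [Finsupp.sum_mapRange_index (h := fun i (a : TruncP K p) => a • u i)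
        fun i => zero_smul (TruncP K p) (u i),
      Finsupp.smul_sum, Finsupp.sum, Finsupp.sum, Submodule.coe_sum]
    refine sum_congr rfl fun i _ => ?_
    rw [Algebra.linearMap_apply, algebraMap_smul, smul_comm, hu, Submodule.coe_smul]
  have hsurj : LinearMap.range φ = ⊤ := eq_top_of_forall_smul_eq_zero _ fun x hx =>
    ⟨φ (lift (b.repr ⟨x, hx⟩)), LinearMap.mem_range_self _ _, by rw [hφ, b.linearCombination_repr]⟩
  have hinj : Function.Injective φ :=
    φ.injective_of_forall_smul_eq_zero ⟨p, tcl_pow_self⟩ fun x hx hφx => by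
      set c := Finsupp.mapRange.linearMap (topCoeff K p) x
      have hxc : τ ^ (p - 1) • lift c = x := by
        convert pow_pred_smul_of_trace_eq_self (trace_mapRange_topCoeff x) hx using 2
        ext i
        rfl
      have hc : c = 0 := linearIndependent_iff.mp b.linearIndependent c <| Subtype.ext <| by
        rw [← hφ, ← map_smul, hxc, hφx]
        rfl
      rw [← hxc, hc, map_zero, smul_zero]
  exact .of_equiv' (LinearEquiv.ofBijective φ ⟨hinj, LinearMap.range_eq_top.1 hsurj⟩)

theorem projective_iff_forall_smul_eq_zero :
    Module.Projective (TruncP K p) M ↔ ∀ m : M, τ • m = 0 → ∃ m', τ ^ (p - 1) • m' = m := by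
  refine ⟨fun _ m hm => ?_, projective_of_forall_smul_eq_zero⟩
  obtain ⟨π, hπ⟩ := exists_trace_eq_self (K := K) (p := p) (M := M)
  exact ⟨π m, pow_pred_smul_of_trace_eq_self (hπ m) hm⟩

theorem exists_of_not_projective (h : ¬ Module.Projective (TruncP K p) M) :
    ∃ (x : M) (a : ℕ), 0 < a ∧ a < p ∧ τ ^ a • x = 0 ∧ ∀ y : M, τ ^ a • y ≠ τ ^ (a - 1) • x := by
  classical
  rw [projective_iff_forall_smul_eq_zero] at h
  push Not at h
  obtain ⟨m, hm, hm'⟩ := h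
  have hex : ∃ a, ∀ y : M, τ ^ a • y ≠ m := ⟨p - 1, hm'⟩
  have ha : 0 < Nat.find hex := Nat.pos_of_ne_zero fun h0 =>
    Nat.find_spec hex m (by rw [h0, pow_zero, one_smul])
  set a := Nat.find hex
  obtain ⟨x, hx⟩ : ∃ x, τ ^ (a - 1) • x = m := by
    simpa using Nat.find_min hex (Nat.sub_lt ha one_pos)
  refine ⟨x, a, ha, (Nat.find_min' hex hm').trans_lt (Nat.sub_lt (NeZero.pos p) one_pos), ?_,
    hx ▸ Nat.find_spec hex⟩
  rwa [← Nat.sub_add_cancel ha, pow_succ', mul_smul, hx]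

end Projective

section Hom

variable {U V H : Type*} [AddCommGroup U] [Module K U] [Module (TruncP K p) U]
  [AddCommGroup V] [Module K V] [Module (TruncP K p) V]

theorem exists_pow_smul_eq_trace (g : U →ₗ[K] V) {a : ℕ} (ha : a ≤ p) {x : U}
    (hx : τ ^ a • x = 0) : ∃ w, τ ^ (p - a) • w = trace p g x := by
  refine ⟨∑ i ∈ range a, τ ^ i • g (τ ^ (a - 1 - i) • x), ?_⟩
  rw [trace, show range p = range (p - a + a) by rw [Nat.sub_add_cancel ha], sum_range_add,
    smul_sum]
  have hlow : ∀ j ∈ range (p - a), τ ^ j • g (τ ^ (p - 1 - j) • x) = 0 := fun j hj => by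
    rw [show p - 1 - j = (p - 1 - j - a) + a by have := mem_range.1 hj; omega, pow_add, mul_smul,
      hx, smul_zero, map_zero, smul_zero]
  rw [sum_eq_zero hlow, zero_add]
  refine sum_congr rfl fun i hi => ?_
  rw [← mul_smul, ← pow_add, show p - 1 - (p - a + i) = a - 1 - i by omega]

variable [IsScalarTower K (TruncP K p) U]

variable (p) in
/-- `u ↦ ∑ ψ (t^k u) t^(n-1-k)` is `A`-linear `U → K[t]/(t^n)` once `ψ` kills `t^n U`; this is its
composite with `1 ↦ v`. -/
noncomputable def cofreeMap (ψ : U →ₗ[K] K) (n : ℕ) (v : V) : U →ₗ[K] V :=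
  ∑ k ∈ range n, (ψ ∘ₗ DistribSMul.toLinearMap K U (τ ^ k)).smulRight (τ ^ (n - 1 - k) • v)

theorem cofreeMap_apply (ψ : U →ₗ[K] K) (n : ℕ) (v : V) (u : U) :
    cofreeMap p ψ n v u = ∑ k ∈ range n, ψ (τ ^ k • u) • τ ^ (n - 1 - k) • v := by
  simp [cofreeMap]

theorem cofreeMap_pow_pred_smul {ψ : U →ₗ[K] K} {n : ℕ} (v : V) (hψ : ∀ y, ψ (τ ^ n • y) = 0)
    (hn : 0 < n) (x : U) :
    cofreeMap p ψ n v (τ ^ (n - 1) • x) = ψ (τ ^ (n - 1) • x) • τ ^ (n - 1) • v := by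
  rw [cofreeMap_apply, sum_eq_single 0]
  · simp
  · intro k _ hk
    rw [smul_smul, ← pow_add, show k + (n - 1) = n + (k - 1) by omega, pow_add, mul_smul, hψ,
      zero_smul]
  · intro h; exact absurd (mem_range.2 hn) h

variable [IsScalarTower K (TruncP K p) V]

theorem cofreeMap_smul {ψ : U →ₗ[K] K} {n : ℕ} {v : V} (hψ : ∀ y, ψ (τ ^ n • y) = 0)
    (hv : τ ^ n • v = 0) (u : U) : cofreeMap p ψ n v (τ • u) = τ • cofreeMap p ψ n v u := by
  let F := fun k => ψ (τ ^ k • u) • τ ^ (n - k) • v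
  have hshift := (sum_range_succ' F n).symm.trans (sum_range_succ F n)
  simp only [F, hψ, zero_smul, add_zero, Nat.sub_zero, hv, smul_zero] at hshift
  rw [cofreeMap_apply, cofreeMap_apply, smul_sum]
  convert hshift using 2 with k hk k hk
  · rw [smul_smul, ← pow_succ, Nat.sub_sub, add_comm 1 k]
  · rw [smul_comm, smul_smul, ← pow_succ', show n - 1 - k + 1 = n - k by
      have := mem_range.1 hk; omega]

theorem apply_pow_pred_smul [Fact p.Prime] [CharP K p] [AddCommGroup H] [Module K H]
    [Module (TruncP K p) H] (e : H ≃ₗ[K] (U →ₗ[K] V))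
    (he : ∀ (h : H) (u : U), e (τ • h) u = τ • e h u - e h (τ • u)) (h : H) (u : U) :
    e (τ ^ (p - 1) • h) u = trace p (e h) u := by
  let L : Module.End K (U →ₗ[K] V) := LinearMap.llcomp K U V V (DistribSMul.toLinearMap K V τ)
  let R : Module.End K (U →ₗ[K] V) := LinearMap.lcomp K V (DistribSMul.toLinearMap K U τ)
  have hL : ∀ j g u, (L ^ j) g u = τ ^ j • g u := by
    intro j
    induction j with
    | zero => simp
    | succ j ih =>
      intro g u
      rw [pow_succ', Module.End.mul_apply]
      change τ • ((L ^ j) g) u = _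
      rw [ih, ← mul_smul, ← pow_succ']
  have hR : ∀ j g u, (R ^ j) g u = g (τ ^ j • u) := by
    intro j
    induction j with
    | zero => simp
    | succ j ih =>
      intro g u
      rw [pow_succ, Module.End.mul_apply, ih]
      change g (τ • τ ^ j • u) = _
      rw [← mul_smul, ← pow_succ']
  have he' : ∀ k h, e (τ ^ k • h) = ((L - R) ^ k) (e h) := by
    intro k
    induction k with
    | zero => simp
    | succ k ih =>
      intro h
      rw [pow_succ', mul_smul, pow_succ', Module.End.mul_apply, ← ih]
      ext u
      exact he _ u
  have hLR : Commute L R := LinearMap.ext fun g => LinearMap.ext fun u => rfl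
  rw [he', hLR.sub_pow_pred_eq_sum (K := K)]
  simp only [LinearMap.sum_apply, Module.End.mul_apply, hL, hR, trace]

variable [NeZero p]

theorem projective_or_projective_of_forall_exists_trace
    (h : ∀ f : U →ₗ[K] V, (∀ u, f (τ • u) = τ • f u) → ∃ g : U →ₗ[K] V, ∀ u, trace p g u = f u) :
    Module.Projective (TruncP K p) U ∨ Module.Projective (TruncP K p) V := by
  by_contra! hUV
  obtain ⟨x, a, ha, hap, hxa, hxa'⟩ := exists_of_not_projective hUV.1
  obtain ⟨v, b, hb, hbp, hvb, hvb'⟩ := exists_of_not_projective hUV.2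
  set m := min a b
  have hx : τ ^ (m - 1) • x ∉ LinearMap.range (DistribSMul.toLinearMap K U (τ ^ m)) := by
    rintro ⟨y, hy⟩
    change τ ^ m • y = _ at hy
    refine hxa' y ?_
    calc τ ^ a • y = τ ^ (a - m) • τ ^ m • y := by
          rw [smul_smul, ← pow_add, Nat.sub_add_cancel (min_le_left a b)]
      _ = τ ^ (a - 1) • x := by
          rw [hy, smul_smul, ← pow_add]
          congr 2
          omega
  obtain ⟨ψ, hψ, hψx⟩ := LinearMap.exists_extend_of_notMem (0 : _ →ₗ[K] K) hx 1
  have hψ' : ∀ y, ψ (τ ^ m • y) = 0 := fun y => LinearMap.congr_fun hψ ⟨τ ^ m • y, y, rfl⟩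
  have hw : τ ^ m • τ ^ (b - m) • v = 0 := by
    rw [smul_smul, ← pow_add, Nat.add_sub_cancel' (min_le_right a b), hvb]
  have hf := cofreeMap_smul (p := p) hψ' hw
  obtain ⟨g, hg⟩ := h _ hf
  obtain ⟨z, hz⟩ := exists_pow_smul_eq_trace g hap.le hxa
  apply hvb' (τ ^ (m - 1 + (p - a) - b) • z)
  calc τ ^ b • τ ^ (m - 1 + (p - a) - b) • z = τ ^ (m - 1) • τ ^ (p - a) • z := by
        rw [smul_smul, smul_smul, ← pow_add, ← pow_add]
        congr 2
        omega
    _ = cofreeMap p ψ m (τ ^ (b - m) • v) (τ ^ (m - 1) • x) := by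
        rw [hz, hg, map_pow_smul_of_map_smul hf]
    _ = τ ^ (b - 1) • v := by
        rw [cofreeMap_pow_pred_smul _ hψ' (by omega), hψx, one_smul, smul_smul, ← pow_add]
        congr 2
        omega

theorem exists_trace_eq_of_projective
    (hUV : Module.Projective (TruncP K p) U ∨ Module.Projective (TruncP K p) V)
    {f : U →ₗ[K] V} (hf : ∀ u, f (τ • u) = τ • f u) : ∃ g : U →ₗ[K] V, ∀ u, trace p g u = f u := by
  rcases hUV with hU | hV
  · obtain ⟨π, hπ⟩ := exists_trace_eq_self (K := K) (p := p) (M := U)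
    exact ⟨f ∘ₗ π, fun u => by rw [trace_comp_left hf, hπ]⟩
  · obtain ⟨π, hπ⟩ := exists_trace_eq_self (K := K) (p := p) (M := V)
    exact ⟨π ∘ₗ f, fun u => by rw [trace_comp_right hf, hπ]⟩

theorem projective_iff_forall_exists_trace [Fact p.Prime] [CharP K p] [AddCommGroup H]
    [Module K H] [Module (TruncP K p) H] [IsScalarTower K (TruncP K p) H]
    (e : H ≃ₗ[K] (U →ₗ[K] V)) (he : ∀ (h : H) (u : U), e (τ • h) u = τ • e h u - e h (τ • u)) :
    Module.Projective (TruncP K p) H ↔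
      ∀ f : U →ₗ[K] V, (∀ u, f (τ • u) = τ • f u) → ∃ g : U →ₗ[K] V, ∀ u, trace p g u = f u := by
  have hker : ∀ h : H, τ • h = 0 ↔ ∀ u, e h (τ • u) = τ • e h u := fun h => by
    rw [← e.map_eq_zero_iff, LinearMap.ext_iff]
    simp only [he, LinearMap.zero_apply, sub_eq_zero]
    exact forall_congr' fun _ => eq_comm
  rw [projective_iff_forall_smul_eq_zero]
  constructor
  · intro hH f hf
    obtain ⟨h', hh'⟩ := hH (e.symm f) ((hker _).2 (by simpa using hf))
    exact ⟨e h', fun u => by rw [← apply_pow_pred_smul e he, hh', e.apply_symm_apply]⟩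
  · intro hH h hh
    obtain ⟨g, hg⟩ := hH (e h) ((hker h).1 hh)
    exact ⟨e.symm g, e.injective <| LinearMap.ext fun u => by
      rw [apply_pow_pred_smul e he, e.apply_symm_apply, hg]⟩

end Hom

end TruncP

theorem stmt4 {K : Type*} [Field K] (p : ℕ) [CharP K p] (hp : 0 < p)
    (U V H : Type*)
    [AddCommGroup U] [Module K U] [Module (TruncP K p) U] [IsScalarTower K (TruncP K p) U]
    [AddCommGroup V] [Module K V] [Module (TruncP K p) V] [IsScalarTower K (TruncP K p) V]
    [AddCommGroup H] [Module K H] [Module (TruncP K p) H] [IsScalarTower K (TruncP K p) H]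
    (e : H ≃ₗ[K] (U →ₗ[K] V))
    (he : ∀ (h : H) (u : U),
      e (tcl K p • h) u = tcl K p • e h u - e h (tcl K p • u)) :
    Module.Projective (TruncP K p) H ↔
      Module.Projective (TruncP K p) U ∨ Module.Projective (TruncP K p) V := by
  have : Fact p.Prime := ⟨(CharP.char_is_prime_or_zero K p).resolve_right hp.ne'⟩
  have : NeZero p := ⟨hp.ne'⟩
  rw [TruncP.projective_iff_forall_exists_trace e he]
  exact ⟨TruncP.projective_or_projective_of_forall_exists_trace,
    fun hUV _ hf => TruncP.exists_trace_eq_of_projective hUV hf⟩
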